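/- arXiv:1510.00290 — 2 statements merged into one kernel-verified Lean document; each statement's English description precedes it below -/
import Mathlib

section
/- Let $c_1 \in (0,1)$, $\lambda > 0$, and let $\delta_{kj} = c_1(k+\lambda) + d_0$ for some constant $d_0 \ge 0$ (so $\delta_{ij} - \delta_{kj} = (i-k)c_1$), with all $\delta_{kj} < 1$. Define coefficients by $b_{i,j,n+1} = \prod_{m=1}^n (1-\delta_{ij}/m)^{-1}$ and, for $k = i-1, i-2, \dots, 0$, $b_{k,j,n+1} = \prod_{m=1}^n(1-\delta_{kj}/m)^{-1} - \sum_{m=1}^n b_{k+1,j,m+1}\frac{c_1(k+\lambda)}{m}\prod_{d=m}^n(1-\delta_{kj}/d)^{-1}$. Then for each $0\le k \le i-1$, $\lim_{n\to\infty} \frac{b_{k,j,n+1}}{b_{i,j,n+1}} = (-1)^{i-k}\prod_{d=k}^{i-1}\frac{\lambda+d}{i-d}$. -/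
/-!
Write `P_δ(n) = ∏_{m=1}^n (1 - δ/m)⁻¹`. Splitting the products in the recursion gives
`b_k(n+1) = P_{δ_k}(n) (1 - S(n))` for a partial sum `S`, so
`b_k(n+1) / b_i(n+1) = (1 - S(n)) / Q(n)` with `Q = P_{δ_i} / P_{δ_k}`. Since `δ_k < δ_i`,
`Q` increases like a multiple of the harmonic series and tends to infinity, and the ratio of
the increments of `S` and `Q` is `(k+λ)/(i-k) · b_{k+1}(n+2) / b_i(n+2)`. By Stolz–Cesàro the
limit for `k` is thus `-(k+λ)/(i-k)` times the limit for `k+1`, and backward induction from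
`k = i` gives the product.
-/

open Filter Finset Asymptotics Topology

/-- **Stolz–Cesàro theorem**. -/
theorem tendsto_div_of_tendsto_sub_div_sub {S Q : ℕ → ℝ} {L : ℝ} (hQ : StrictMono Q)
    (hQ_top : Tendsto Q atTop atTop)
    (h : Tendsto (fun n => (S (n + 1) - S n) / (Q (n + 1) - Q n)) atTop (𝓝 L)) :
    Tendsto (fun n => S n / Q n) atTop (𝓝 L) := by
  have hΔ : ∀ n, 0 < Q (n + 1) - Q n := fun n => sub_pos.2 (hQ n.lt_succ_self)
  have hΔ_top : Tendsto (fun n => ∑ m ∈ range n, (Q (m + 1) - Q m)) atTop atTop := by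
    simp only [sum_range_sub]
    exact tendsto_atTop_add_const_right _ (-Q 0) hQ_top
  have hinc : (fun n => S (n + 1) - S n - L * (Q (n + 1) - Q n)) =o[atTop]
      fun n => Q (n + 1) - Q n := by
    have h0 := (isLittleO_one_iff ℝ).2 (tendsto_sub_nhds_zero_iff.2 h)
    refine (h0.mul_isBigO (isBigO_refl _ _)).congr (fun n => ?_) (fun n => one_mul _)
    field_simp [(hΔ n).ne']
  have hsum : (fun n => S n - S 0 - L * (Q n - Q 0)) =o[atTop] fun n => Q n - Q 0 :=
    (hinc.sum_range (fun n => (hΔ n).le) hΔ_top).congr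
      (fun n => by rw [sum_sub_distrib, sum_range_sub, ← mul_sum, sum_range_sub])
      (fun n => sum_range_sub Q n)
  have hconst : ∀ c : ℝ, (fun _ => c) =o[atTop] Q := fun c =>
    isLittleO_const_left.2 (Or.inr (tendsto_abs_atTop_atTop.comp hQ_top))
  have hmain : (fun n => S n - L * Q n) =o[atTop] Q := by
    have := (hsum.trans_isBigO ((isBigO_refl Q _).sub (hconst (Q 0)).isBigO)).add
      (hconst (S 0 - L * Q 0))
    exact this.congr_left fun n => by ring
  rw [← zero_add L]
  refine (hmain.tendsto_div_nhds_zero.add_const L).congr' ?_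
  filter_upwards [hQ_top.eventually_gt_atTop 0] with n hn
  field_simp
  ring

theorem tendsto_sum_range_one_div_nat_add_atTop {c : ℝ} (hc : 0 < c) :
    Tendsto (fun n : ℕ => ∑ m ∈ range n, 1 / ((m : ℝ) + c)) atTop atTop := by
  have hpos : ∀ m : ℕ, 0 < (m : ℝ) + c := fun m => by positivity
  refine (not_summable_iff_tendsto_nat_atTop_of_nonneg fun m => (one_div_pos.2 (hpos m)).le).1 ?_
  simpa [abs_of_pos (hpos _)] using (Real.summable_one_div_nat_add_rpow c 1).not.2 (lt_irrefl 1)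

noncomputable def invProd (δ : ℝ) (n : ℕ) : ℝ := ∏ m ∈ Icc 1 n, (1 - δ / m)⁻¹

namespace invProd

variable {a b δ : ℝ}

@[simp] theorem zero (δ : ℝ) : invProd δ 0 = 1 := by simp [invProd]

theorem succ (hδ : δ < 1) (n : ℕ) :
    invProd δ (n + 1) = invProd δ n * ((n + 1) / (n + 1 - δ)) := by
  have h : (n : ℝ) + 1 - δ ≠ 0 := by linarith [(n.cast_nonneg : (0 : ℝ) ≤ n)]
  rw [invProd, prod_Icc_succ_top (by omega), ← invProd]
  push_cast
  field_simp

theorem pos (hδ : δ < 1) (n : ℕ) : 0 < invProd δ n := by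
  induction n with
  | zero => simp
  | succ n ih =>
    rw [succ hδ]
    have : (0 : ℝ) < n + 1 - δ := by linarith [(n.cast_nonneg : (0 : ℝ) ≤ n)]
    positivity

theorem mul_prod_Icc {m n : ℕ} (hm : 1 ≤ m) (hmn : m ≤ n) :
    invProd δ (m - 1) * ∏ d ∈ Icc m n, (1 - δ / d)⁻¹ = invProd δ n := by
  obtain ⟨p, rfl⟩ := Nat.exists_eq_add_of_le' hm
  have h := prod_Ioc_consecutive (fun d : ℕ => (1 - δ / d)⁻¹) p.zero_le (by omega : p ≤ n)
  simpa only [invProd, Nat.add_sub_cancel, ← Icc_add_one_left_eq_Ioc, zero_add] using h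

theorem div_succ_sub_div (ha : a < 1) (hb : b < 1) (n : ℕ) :
    invProd a (n + 1) / invProd b (n + 1) - invProd a n / invProd b n =
      invProd a n / invProd b n * ((a - b) / (n + 1 - a)) := by
  have hna : (n : ℝ) + 1 - a ≠ 0 := by linarith [(n.cast_nonneg : (0 : ℝ) ≤ n)]
  have hnb : (n : ℝ) + 1 - b ≠ 0 := by linarith [(n.cast_nonneg : (0 : ℝ) ≤ n)]
  have := (pos hb n).ne'
  rw [succ ha, succ hb]
  field_simp
  ring

theorem strictMono_div (ha : a < 1) (hba : b < a) :
    StrictMono fun n => invProd a n / invProd b n := by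
  refine strictMono_nat_of_lt_succ fun n => sub_pos.1 ?_
  rw [div_succ_sub_div ha (hba.trans ha)]
  have : (0 : ℝ) < n + 1 - a := by linarith [(n.cast_nonneg : (0 : ℝ) ≤ n)]
  have := pos ha n
  have := pos (hba.trans ha) n
  have := sub_pos.2 hba
  positivity

theorem tendsto_div_atTop (ha : a < 1) (hba : b < a) :
    Tendsto (fun n => invProd a n / invProd b n) atTop atTop := by
  set Q := fun n => invProd a n / invProd b n
  have hQ := strictMono_div ha hba
  have hlow : ∀ n, (a - b) * ∑ m ∈ range n, 1 / ((m : ℝ) + (1 - a)) ≤ Q n - 1 := by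
    intro n
    rw [show Q n - 1 = Q n - Q 0 by simp [Q], ← sum_range_sub, mul_sum]
    refine sum_le_sum fun m _ => ?_
    rw [div_succ_sub_div ha (hba.trans ha)]
    have : (0 : ℝ) < m + 1 - a := by linarith [(m.cast_nonneg : (0 : ℝ) ≤ m)]
    have h1 : 1 ≤ Q m := by simpa [Q] using hQ.monotone m.zero_le
    calc (a - b) * (1 / (m + (1 - a))) ≤ 1 * ((a - b) / (m + 1 - a)) := by
          rw [one_mul, mul_one_div, add_sub_assoc]
      _ ≤ Q m * ((a - b) / (m + 1 - a)) := by gcongr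
  refine tendsto_atTop_mono (fun n => le_sub_iff_add_le.1 (hlow n)) ?_
  exact tendsto_atTop_add_const_right _ _
    ((tendsto_sum_range_one_div_nat_add_atTop (sub_pos.2 ha)).const_mul_atTop (sub_pos.2 hba))

theorem tendsto_sub_sum_div {c L : ℝ} (ha : a < 1) (hba : b < a) {f : ℕ → ℝ}
    (hf : Tendsto (fun n => f (n + 1) / invProd a n) atTop (𝓝 L)) :
    Tendsto (fun n => (invProd b n - ∑ m ∈ Icc 1 n,
        f (m + 1) * (c / m) * ∏ d ∈ Icc m n, (1 - b / d)⁻¹) / invProd a n)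
      atTop (𝓝 (-(c / (a - b) * L))) := by
  have hb := hba.trans ha
  set Q := fun n => invProd a n / invProd b n
  set S := fun n => ∑ m ∈ Icc 1 n, f (m + 1) * (c / m) / invProd b (m - 1)
  have hnum : ∀ n, invProd b n - ∑ m ∈ Icc 1 n,
      f (m + 1) * (c / m) * ∏ d ∈ Icc m n, (1 - b / d)⁻¹ = invProd b n * (1 - S n) := by
    intro n
    rw [mul_sub, mul_one, mul_sum]
    congr 1
    refine sum_congr rfl fun m hm => ?_
    obtain ⟨hm1, hmn⟩ := mem_Icc.1 hm
    rw [← mul_prod_Icc hm1 hmn]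
    field_simp [(pos hb (m - 1)).ne']
  have hstep : ∀ n, (S (n + 1) - S n) / (Q (n + 1) - Q n) =
      c / (a - b) * (f (n + 1 + 1) / invProd a (n + 1)) := by
    intro n
    have hna : (n : ℝ) + 1 - a ≠ 0 := by linarith [(n.cast_nonneg : (0 : ℝ) ≤ n)]
    have := (pos ha n).ne'
    have := (pos hb n).ne'
    have := (sub_pos.2 hba).ne'
    simp only [S, Q]
    rw [sum_Icc_succ_top (by omega), add_sub_cancel_left, div_succ_sub_div ha hb, succ ha]
    push_cast
    field_simp
  have hSQ : Tendsto (fun n => S n / Q n) atTop (𝓝 (c / (a - b) * L)) :=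
    tendsto_div_of_tendsto_sub_div_sub (strictMono_div ha hba) (tendsto_div_atTop ha hba)
      (by simpa only [hstep, Function.comp_def] using
        (hf.comp (tendsto_add_atTop_nat 1)).const_mul _)
  rw [← zero_sub]
  refine ((tendsto_inv_atTop_zero.comp (tendsto_div_atTop ha hba)).sub hSQ).congr fun n => ?_
  have := (pos ha n).ne'
  have := (pos hb n).ne'
  simp only [Function.comp, hnum, Q]
  field_simp

end invProd

theorem stmt5_general (c1 lam d0 : ℝ) (hc1 : 0 < c1) (i : ℕ)
    (δ : ℕ → ℝ) (hδ : ∀ k : ℕ, δ k = c1 * ((k : ℝ) + lam) + d0)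
    (hδlt : ∀ k ≤ i, δ k < 1)
    (b : ℕ → ℕ → ℝ)
    (htop : ∀ n : ℕ, b i (n + 1) = ∏ m ∈ Finset.Icc 1 n, (1 - δ i / (m : ℝ))⁻¹)
    (hrec : ∀ k < i, ∀ n : ℕ,
      b k (n + 1) = (∏ m ∈ Finset.Icc 1 n, (1 - δ k / (m : ℝ))⁻¹)
        - ∑ m ∈ Finset.Icc 1 n, b (k + 1) (m + 1) * (c1 * ((k : ℝ) + lam) / m) *
            ∏ d ∈ Finset.Icc m n, (1 - δ k / (d : ℝ))⁻¹) :
    ∀ k < i, Tendsto (fun n : ℕ => b k (n + 1) / b i (n + 1)) atTop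
      (nhds ((-1 : ℝ) ^ (i - k) * ∏ d ∈ Finset.Ico k i, (lam + d) / ((i : ℝ) - d))) := by
  have hbi : ∀ n, b i (n + 1) = invProd (δ i) n := htop
  suffices ∀ k ≤ i, Tendsto (fun n : ℕ => b k (n + 1) / b i (n + 1)) atTop
      (nhds ((-1 : ℝ) ^ (i - k) * ∏ d ∈ Finset.Ico k i, (lam + d) / ((i : ℝ) - d))) from
    fun k hk => this k hk.le
  intro k hk
  induction hk using Nat.decreasingInduction with
  | self =>
    simp only [Nat.sub_self, pow_zero, Ico_self, prod_empty, mul_one]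
    refine tendsto_const_nhds.congr fun n => ?_
    rw [hbi, div_self (invProd.pos (hδlt i le_rfl) n).ne']
  | of_succ k hk ih =>
    have hik : (k : ℝ) < i := by exact_mod_cast hk
    have hgap : δ i - δ k = c1 * (i - k) := by rw [hδ, hδ]; ring
    have hδki : δ k < δ i := by nlinarith
    have hlim := invProd.tendsto_sub_sum_div (c := c1 * (k + lam)) (hδlt i le_rfl) hδki
      (by simpa only [hbi] using ih)
    convert hlim using 2 with n
    · rw [hrec k hk, hbi]; rfl
    · rw [hgap, prod_eq_prod_Ico_succ_bot hk, show i - k = i - (k + 1) + 1 by omega, pow_succ]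
      field_simp [(sub_pos.2 hik).ne']
      ring

/-- Asymptotic ratio of the martingale coefficients: with
`δ_k = c₁(k+λ) + d₀ < 1`, `b_{i,n+1} = ∏_{m=1}^n (1-δ_i/m)⁻¹` and the backward
recursion for `b_{k,n+1}`, one has
`b_{k,n+1}/b_{i,n+1} → (-1)^{i-k} ∏_{d=k}^{i-1} (λ+d)/(i-d)`. -/
theorem stmt5 (c1 lam d0 : ℝ) (hc1 : 0 < c1) (hc1' : c1 < 1) (hlam : 0 < lam)
    (hd0 : 0 ≤ d0) (i : ℕ)
    (δ : ℕ → ℝ) (hδ : ∀ k : ℕ, δ k = c1 * ((k : ℝ) + lam) + d0)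
    (hδlt : ∀ k ≤ i, δ k < 1)
    (b : ℕ → ℕ → ℝ)
    (htop : ∀ n : ℕ, b i (n + 1) = ∏ m ∈ Finset.Icc 1 n, (1 - δ i / (m : ℝ))⁻¹)
    (hrec : ∀ k < i, ∀ n : ℕ,
      b k (n + 1) = (∏ m ∈ Finset.Icc 1 n, (1 - δ k / (m : ℝ))⁻¹)
        - ∑ m ∈ Finset.Icc 1 n, b (k + 1) (m + 1) * (c1 * ((k : ℝ) + lam) / m) *
            ∏ d ∈ Finset.Icc m n, (1 - δ k / (d : ℝ))⁻¹) :
    ∀ k < i, Tendsto (fun n : ℕ => b k (n + 1) / b i (n + 1)) atTop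
      (nhds ((-1 : ℝ) ^ (i - k) * ∏ d ∈ Finset.Ico k i, (lam + d) / ((i : ℝ) - d))) :=
  stmt5_general c1 lam d0 hc1 i δ hδ hδlt b htop hrec
end

section
/- Suppose coefficients $(b_{k,l,n})$ satisfy the four recursions (listed in context) making $M_n(i,j) = \sum_{l=0}^j\sum_{k=0}^i b_{k,l,n}(N_n(k,l)-\nu_n(k,l))$ well-defined, and $(\nu_n(k,l))$ satisfies the mean recursion. Then the telescoping identity holds: $\sum_{l=0}^j\sum_{k=0}^i \big(b_{k,l,n+1}\nu_{n+1}(k,l) - b_{k,l,n}\nu_n(k,l)\big) = \alpha\, b_{0,1,n+1} + \gamma\, b_{1,0,n+1}$. -/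
open Finset

/-!
The coefficients `b_{·,·,n}` satisfy the adjoint (transposed) recursion of the one driving the
means `ν_n`. Hence in the pairing `∑ b_{k,l,n+1} ν_{n+1}(k,l) - ∑ b_{k,l,n} ν_n(k,l)` every
transport term `c₁ (k + λ)/n · ν_n(k,l)` appears once with `b_{k+1,l,n+1}` and once with the
opposite sign, so the sum telescopes in `k` and in `l`; the boundary terms vanish because
`b_{i+1,·,·} = b_{·,j+1,·} = 0`, and only the sources `α`, `γ` at `(0,1)` and `(1,0)` survive.
-/

section Telescoping

variable {R : Type*} [CommRing R] {i j : ℕ}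

theorem sum_range_sum_range_mul_ite_pair_eq (f : ℕ → ℕ → R)
    (hfi : ∀ l, f (i + 1) l = 0) (hfj : ∀ k, f k (j + 1) = 0)
    (a : R) (p q : ℕ) (hp : p ≤ i + 1) (hq : q ≤ j + 1) :
    ∑ l ∈ range (j + 1), ∑ k ∈ range (i + 1), f k l * (if (k, l) = (p, q) then a else 0)
      = a * f p q := by
  simp only [Prod.mk.injEq, ite_and, mul_ite, mul_zero, sum_ite_eq', mem_range]
  by_cases hpi : p < i + 1
  · by_cases hqj : q < j + 1
    · simp [hpi, hqj, mul_comm]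
    · simp [hpi, show q = j + 1 by omega, hfj]
  · simp [show p = i + 1 by omega, hfi]

theorem backward_recursion_of_vanishing_boundary {B B' : ℕ → ℕ → R} {d : ℕ → ℕ → R}
    {r s : ℕ → R} (hK : ∀ l, B' (i + 1) l = 0) (hL : ∀ k, B' k (j + 1) = 0)
    (h1 : B' i j * d i j = B i j)
    (h2 : ∀ k < i, B' k j * d k j + B' (k + 1) j * r k = B k j)
    (h3 : ∀ l < j, B' i l * d i l + B' i (l + 1) * s l = B i l)
    (h4 : ∀ k < i, ∀ l < j, B' k l * d k l + B' (k + 1) l * r k + B' k (l + 1) * s l = B k l) :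
    ∀ k ≤ i, ∀ l ≤ j, B' k l * d k l + B' (k + 1) l * r k + B' k (l + 1) * s l = B k l := by
  intro k hk l hl
  rcases hk.lt_or_eq with hk | rfl <;> rcases hl.lt_or_eq with hl | rfl
  · exact h4 k hk l hl
  · simpa [hL] using h2 k hk
  · simpa [hK] using h3 l hl
  · simpa [hK, hL] using h1

/-- `inK` and `inL` are the inflows into `(k, l)` from `(k - 1, l)` and `(k, l - 1)`. -/
theorem sum_sum_pairing_sub_eq_sum_sum_source {B B' V V' src inK inL d : ℕ → ℕ → R}
    {r s : ℕ → R} (hK : ∀ l, B' (i + 1) l = 0) (hL : ∀ k, B' k (j + 1) = 0)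
    (hB : ∀ k ≤ i, ∀ l ≤ j, B' k l * d k l + B' (k + 1) l * r k + B' k (l + 1) * s l = B k l)
    (hV : ∀ k ≤ i, ∀ l ≤ j, V' k l = src k l + d k l * V k l + inK k l + inL k l)
    (hinK0 : ∀ l, inK 0 l = 0) (hinK : ∀ k l, inK (k + 1) l = r k * V k l)
    (hinL0 : ∀ k, inL k 0 = 0) (hinL : ∀ k l, inL k (l + 1) = s l * V k l) :
    ∑ l ∈ range (j + 1), ∑ k ∈ range (i + 1), (B' k l * V' k l - B k l * V k l)
      = ∑ l ∈ range (j + 1), ∑ k ∈ range (i + 1), B' k l * src k l := by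
  have hcell : ∀ l ∈ range (j + 1), ∀ k ∈ range (i + 1),
      B' k l * V' k l - B k l * V k l = B' k l * src k l
        + (B' k l * inK k l - B' (k + 1) l * inK (k + 1) l)
        + (B' k l * inL k l - B' k (l + 1) * inL k (l + 1)) := by
    intro l hl k hk
    rw [mem_range_succ_iff] at hl hk
    rw [hV k hk l hl, ← hB k hk l hl, hinK, hinL]
    ring
  have htelK : ∀ l, ∑ k ∈ range (i + 1), (B' k l * inK k l - B' (k + 1) l * inK (k + 1) l) = 0 :=
    fun l => by rw [sum_range_sub' (fun k => B' k l * inK k l), hinK0, hK]; ring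
  have htelL : ∀ k, ∑ l ∈ range (j + 1), (B' k l * inL k l - B' k (l + 1) * inL k (l + 1)) = 0 :=
    fun k => by rw [sum_range_sub' (fun l => B' k l * inL k l), hinL0, hL]; ring
  rw [sum_congr rfl fun l hl => sum_congr rfl (hcell l hl)]
  simp only [sum_add_distrib]
  rw [sum_comm (f := fun l k => B' k l * inL k l - B' k (l + 1) * inL k (l + 1))]
  simp [htelK, htelL]

end Telescoping

theorem stmt11_general (i j : ℕ) (α γ c1 c2 lam mu : ℝ)
    (δ : ℕ → ℕ → ℝ)
    (b : ℕ → ℕ → ℕ → ℝ) (ν : ℕ → ℕ → ℕ → ℝ)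
    (hconvK : ∀ l n : ℕ, b (i + 1) l n = 0) (hconvL : ∀ k n : ℕ, b k (j + 1) n = 0)
    (hrec1 : ∀ n : ℕ, 1 ≤ n → b i j (n + 1) * (1 - δ i j / n) = b i j n)
    (hrec2 : ∀ n : ℕ, 1 ≤ n → ∀ k < i,
      b k j (n + 1) * (1 - δ k j / n) + b (k + 1) j (n + 1) * (c1 * ((k : ℝ) + lam) / n)
        = b k j n)
    (hrec3 : ∀ n : ℕ, 1 ≤ n → ∀ l < j,
      b i l (n + 1) * (1 - δ i l / n) + b i (l + 1) (n + 1) * (c2 * ((l : ℝ) + mu) / n)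
        = b i l n)
    (hrec4 : ∀ n : ℕ, 1 ≤ n → ∀ k < i, ∀ l < j,
      b k l (n + 1) * (1 - δ k l / n) + b (k + 1) l (n + 1) * (c1 * ((k : ℝ) + lam) / n)
        + b k (l + 1) (n + 1) * (c2 * ((l : ℝ) + mu) / n) = b k l n)
    (hmean : ∀ n : ℕ, 1 ≤ n → ∀ k ≤ i, ∀ l ≤ j,
      ν (n + 1) k l = (if (k, l) = (0, 1) then α else 0) + (if (k, l) = (1, 0) then γ else 0)
        + (1 - δ k l / n) * ν n k l
        + (if 1 ≤ k then c1 * ((k : ℝ) - 1 + lam) / n * ν n (k - 1) l else 0)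
        + (if 1 ≤ l then c2 * ((l : ℝ) - 1 + mu) / n * ν n k (l - 1) else 0)) :
    ∀ n : ℕ, 1 ≤ n →
      ∑ l ∈ Finset.range (j + 1), ∑ k ∈ Finset.range (i + 1),
          (b k l (n + 1) * ν (n + 1) k l - b k l n * ν n k l)
        = α * b 0 1 (n + 1) + γ * b 1 0 (n + 1) := by
  intro n hn
  have hb := backward_recursion_of_vanishing_boundary (B := fun k l => b k l n)
    (B' := fun k l => b k l (n + 1)) (d := fun k l => 1 - δ k l / n)
    (r := fun k => c1 * ((k : ℝ) + lam) / n) (s := fun l => c2 * ((l : ℝ) + mu) / n)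
    (hconvK · _) (hconvL · _) (hrec1 n hn) (hrec2 n hn) (hrec3 n hn) (hrec4 n hn)
  rw [sum_sum_pairing_sub_eq_sum_sum_source (B' := fun k l => b k l (n + 1))
    (V := fun k l => ν n k l) (hconvK · _) (hconvL · _) hb (hmean n hn)
    (by simp) (fun _ _ => by simp) (by simp) (fun _ _ => by simp)]
  simp only [mul_add, sum_add_distrib]
  have hsource := sum_range_sum_range_mul_ite_pair_eq (fun k l => b k l (n + 1))
    (hconvK · _) (hconvL · _)
  rw [hsource α 0 1 (by omega) (by omega), hsource γ 1 0 (by omega) (by omega)]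

/-- Telescoping identity for the compensator part of the martingale `M_n(i,j)`:
`∑_{l=0}^{j} ∑_{k=0}^{i} (b_{k,l,n+1} ν_{n+1}(k,l) - b_{k,l,n} ν_n(k,l))
  = α b_{0,1,n+1} + γ b_{1,0,n+1}`. -/
theorem stmt11 (i j : ℕ) (α γ c1 c2 lam mu : ℝ)
    (hc1 : 0 < c1) (hc2 : 0 < c2) (hlam : 0 < lam) (hmu : 0 < mu)
    (δ : ℕ → ℕ → ℝ) (hδ : ∀ k l : ℕ, δ k l = c1 * ((k : ℝ) + lam) + c2 * ((l : ℝ) + mu))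
    (b : ℕ → ℕ → ℕ → ℝ) (ν : ℕ → ℕ → ℕ → ℝ)
    (hconvK : ∀ l n : ℕ, b (i + 1) l n = 0) (hconvL : ∀ k n : ℕ, b k (j + 1) n = 0)
    (hrec1 : ∀ n : ℕ, 1 ≤ n → b i j (n + 1) * (1 - δ i j / n) = b i j n)
    (hrec2 : ∀ n : ℕ, 1 ≤ n → ∀ k < i,
      b k j (n + 1) * (1 - δ k j / n) + b (k + 1) j (n + 1) * (c1 * ((k : ℝ) + lam) / n)
        = b k j n)
    (hrec3 : ∀ n : ℕ, 1 ≤ n → ∀ l < j,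
      b i l (n + 1) * (1 - δ i l / n) + b i (l + 1) (n + 1) * (c2 * ((l : ℝ) + mu) / n)
        = b i l n)
    (hrec4 : ∀ n : ℕ, 1 ≤ n → ∀ k < i, ∀ l < j,
      b k l (n + 1) * (1 - δ k l / n) + b (k + 1) l (n + 1) * (c1 * ((k : ℝ) + lam) / n)
        + b k (l + 1) (n + 1) * (c2 * ((l : ℝ) + mu) / n) = b k l n)
    (hmean : ∀ n : ℕ, 1 ≤ n → ∀ k ≤ i, ∀ l ≤ j,
      ν (n + 1) k l = (if (k, l) = (0, 1) then α else 0) + (if (k, l) = (1, 0) then γ else 0)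
        + (1 - δ k l / n) * ν n k l
        + (if 1 ≤ k then c1 * ((k : ℝ) - 1 + lam) / n * ν n (k - 1) l else 0)
        + (if 1 ≤ l then c2 * ((l : ℝ) - 1 + mu) / n * ν n k (l - 1) else 0)) :
    ∀ n : ℕ, 1 ≤ n →
      ∑ l ∈ Finset.range (j + 1), ∑ k ∈ Finset.range (i + 1),
          (b k l (n + 1) * ν (n + 1) k l - b k l n * ν n k l)
        = α * b 0 1 (n + 1) + γ * b 1 0 (n + 1) :=
  stmt11_general i j α γ c1 c2 lam mu δ b ν hconvK hconvL hrec1 hrec2 hrec3 hrec4 hmean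
end
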